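/- For the exponent set λⱼ = 2j − 1 + 1/(2(2j−1)), j = 1, 2, …, the sequences aⱼ = 1 and bⱼ = −1 are not Bohr-equivalent: there is no single ℚ-linear map ψ : span_ℚ(Λ) → ℝ with e^{iψ(λⱼ)} = −1 for all j. -/

import Mathlib

noncomputable section

/-- Bohr equivalence of coefficient sequences: a single `ℚ`-linear map `ψ` on the `ℚ`-span of
all the exponents with `b j = a j * exp (i ψ (lam j))` for every `j`. -/
def BohrEquivSeq (lam : ℕ → ℝ) (a b : ℕ → ℂ) : Prop :=
  ∃ ψ : (Submodule.span ℚ (Set.range lam)) →ₗ[ℚ] ℝ,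
    ∀ j : ℕ, b j = a j * Complex.exp
      (Complex.I * (ψ ⟨lam j, Submodule.subset_span (Set.mem_range_self j)⟩))

/-- The exponents `λⱼ = 2j − 1 + 1/(2(2j−1))`, `j = 1, 2, …` (here indexed by `ℕ` starting
from `0`, so `lam j` is the `(j+1)`-st exponent). -/
def lamEx (j : ℕ) : ℝ := (2 * (j : ℝ) + 1) + 1 / (2 * (2 * (j : ℝ) + 1))

/-!
With `n = 2j + 1` we have `λ = (2n² + 1)/(2n)` and `λ₀ = 3/2`, so `3n • λ = (2n² + 1) • λ₀`.
If `e^{iψ(λ)} = -1` for every exponent, then `ψ(λ) = m π` with `m` a nonzero integer, and the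
relation gives `3n mⱼ = (2n² + 1) m₀`. Since `n` is coprime to `2n² + 1`, every odd `n`
divides `m₀ ≠ 0`, which is absurd for `n > |m₀|`.
-/

theorem exists_int_ne_zero_of_exp_mul_I_eq_neg_one {θ : ℝ}
    (h : Complex.exp (Complex.I * θ) = -1) : ∃ m : ℤ, m ≠ 0 ∧ θ = m * Real.pi := by
  have hcos : Real.cos θ = -1 := by
    rw [← Complex.exp_ofReal_mul_I_re, mul_comm, h, Complex.neg_re, Complex.one_re]
  obtain ⟨k, hk⟩ := Real.cos_eq_neg_one_iff.mp hcos
  exact ⟨2 * k + 1, by omega, by push_cast; linarith⟩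

theorem mul_apply_eq_of_smul_eq {ι : Type*} {lam : ι → ℝ}
    (ψ : Submodule.span ℚ (Set.range lam) →ₗ[ℚ] ℝ) {i k : ι} {q r : ℚ}
    (h : q • lam i = r • lam k) :
    q * ψ ⟨lam i, Submodule.subset_span (Set.mem_range_self i)⟩ =
      r * ψ ⟨lam k, Submodule.subset_span (Set.mem_range_self k)⟩ := by
  simpa only [map_smul, Rat.smul_def] using congrArg ψ (Subtype.ext h :
    q • (⟨lam i, Submodule.subset_span (Set.mem_range_self i)⟩ :
      Submodule.span ℚ (Set.range lam)) = r • ⟨lam k, Submodule.subset_span (Set.mem_range_self k)⟩)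

theorem smul_lamEx_eq (j : ℕ) :
    (3 * (2 * j + 1) : ℚ) • lamEx j = (2 * (2 * j + 1) ^ 2 + 1 : ℚ) • lamEx 0 := by
  have hn : (2 * (j : ℝ) + 1) ≠ 0 := by positivity
  simp only [lamEx, Rat.smul_def]
  push_cast
  field_simp
  ring

theorem Int.dvd_of_mul_eq_two_sq_add_one_mul {n a b : ℤ}
    (h : 3 * n * a = (2 * n ^ 2 + 1) * b) : n ∣ b :=
  ⟨3 * a - 2 * n * b, by linear_combination -h⟩

/-- For the exponents `λⱼ = 2j − 1 + 1/(2(2j−1))`, the constant sequences `aⱼ = 1` and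
`bⱼ = −1` are *not* Bohr-equivalent. -/
theorem not_bohrEquiv_one_negOne :
    ¬ BohrEquivSeq lamEx (fun _ => (1 : ℂ)) (fun _ => (-1 : ℂ)) := by
  rintro ⟨ψ, hψ⟩
  have phase (j : ℕ) : ∃ m : ℤ, m ≠ 0 ∧
      ψ ⟨lamEx j, Submodule.subset_span (Set.mem_range_self j)⟩ = m * Real.pi :=
    exists_int_ne_zero_of_exp_mul_I_eq_neg_one (by simpa using (hψ j).symm)
  obtain ⟨m₀, hm₀, hψ₀⟩ := phase 0
  set j := m₀.natAbs
  obtain ⟨m, -, hψj⟩ := phase j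
  have hrel := mul_apply_eq_of_smul_eq ψ (smul_lamEx_eq j)
  rw [hψj, hψ₀] at hrel
  have hint : 3 * (2 * (j : ℤ) + 1) * m = (2 * (2 * j + 1) ^ 2 + 1) * m₀ := by
    have hreal : ((3 * (2 * (j : ℤ) + 1) * m : ℤ) : ℝ) * Real.pi =
        ((2 * (2 * j + 1) ^ 2 + 1) * m₀ : ℤ) * Real.pi := by
      push_cast at hrel ⊢; linarith
    exact_mod_cast mul_right_cancel₀ Real.pi_ne_zero hreal
  have hlt : m₀.natAbs < (2 * (j : ℤ) + 1).natAbs := by omega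
  exact hm₀ (Int.eq_zero_of_dvd_of_natAbs_lt_natAbs (Int.dvd_of_mul_eq_two_sq_add_one_mul hint) hlt)
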